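/- Let M be the block matrix ((id_n, 0),(A, −b)) and suppose the r × r submatrix A_1 of A on rows [r] and columns J = {j_1,…,j_r} is nonsingular. Then the matrix M_r⟨J⟩ obtained by performing the r pivot eliminations at positions (n+i, j_i) and deleting rows n+1,…,n+r and columns j_1,…,j_r has its first n−r columns linearly independent. -/
import Mathlib


open Matrix

/-- Gaussian column elimination with the `(i,j)` entry as pivot. -/
def colElim {R C : Type*} [DecidableEq C] (M : Matrix R C ℚ) (i : R) (j : C) :
    Matrix R C ℚ :=
  fun a s => if s = j then M a s else M a s - M i s / M i j * M a j

/-- The matrix `M = ((id_n, 0), (A, -b))` with rows `Fin n ⊕ Fin r` and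
columns `Fin n ⊕ Unit`. -/
def bigM {r n : ℕ} (A : Matrix (Fin r) (Fin n) ℤ) (b : Fin r → ℤ) :
    Matrix (Fin n ⊕ Fin r) (Fin n ⊕ Unit) ℚ :=
  fun p q =>
    match p, q with
    | Sum.inl p', Sum.inl q' => if p' = q' then 1 else 0
    | Sum.inl _, Sum.inr _ => 0
    | Sum.inr i, Sum.inl c => (A i c : ℚ)
    | Sum.inr i, Sum.inr _ => -(b i : ℚ)

/-- Perform the `r` pivot eliminations at the positions `(n + i, j i)` for `i = 1, …, r`. -/
def elimAll {r n : ℕ} (M : Matrix (Fin n ⊕ Fin r) (Fin n ⊕ Unit) ℚ) (j : Fin r ↪ Fin n) :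
    Matrix (Fin n ⊕ Fin r) (Fin n ⊕ Unit) ℚ :=
  (List.finRange r).foldl (fun N i => colElim N (Sum.inr i) (Sum.inl (j i))) M

/-- If the `r × r` submatrix of `A` on the columns `J = {j_1,…,j_r}` is nonsingular,
then after the `r` pivot eliminations at positions `(n+i, j_i)` (all pivots nonzero),
the columns of the resulting matrix `M_r⟨J⟩` outside `J`, restricted to the retained
rows `1, …, n`, are linearly independent. -/
theorem stmt4 (r n : ℕ) (A : Matrix (Fin r) (Fin n) ℤ) (b : Fin r → ℤ)
    (j : Fin r ↪ Fin n)
    (hminor : (Matrix.of fun p q : Fin r => ((A p (j q) : ℚ))).det ≠ 0)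
    (hpiv : ∀ (L₁ L₂ : List (Fin r)) (i : Fin r), List.finRange r = L₁ ++ i :: L₂ →
      (L₁.foldl (fun N i' => colElim N (Sum.inr i') (Sum.inl (j i'))) (bigM A b))
        (Sum.inr i) (Sum.inl (j i)) ≠ 0)
    (N : Matrix (Fin n ⊕ Fin r) (Fin n ⊕ Unit) ℚ) (hN : N = elimAll (bigM A b) j) :
    LinearIndependent ℚ
      (fun c : {c : Fin n // c ∉ Set.range j} => fun p : Fin n => N (Sum.inl p) (Sum.inl c.1)) := by
  -- Rows `inl c` with `c ∉ range j` remain standard basis rows through the fold.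
  have key : ∀ (L : List (Fin r)) (M : Matrix (Fin n ⊕ Fin r) (Fin n ⊕ Unit) ℚ),
      (∀ c : Fin n, c ∉ Set.range j → ∀ s, M (Sum.inl c) s = if s = Sum.inl c then 1 else 0) →
      ∀ c : Fin n, c ∉ Set.range j → ∀ s,
        (L.foldl (fun N i => colElim N (Sum.inr i) (Sum.inl (j i))) M) (Sum.inl c) s
          = if s = Sum.inl c then 1 else 0 := by
    intro L
    induction L with
    | nil => intro M h; exact h
    | cons i L ih =>
      intro M h
      simp only [List.foldl_cons]
      apply ih
      intro c hc s
      have hji : (Sum.inl (j i) : Fin n ⊕ Unit) ≠ Sum.inl c := by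
        intro h'
        exact hc ⟨i, Sum.inl.inj h'⟩
      simp only [colElim]
      split
      · exact h c hc s
      · rw [h c hc s, h c hc (Sum.inl (j i))]
        simp [hji]
  have hrow : ∀ c : Fin n, c ∉ Set.range j → ∀ s,
      N (Sum.inl c) s = if s = Sum.inl c then 1 else 0 := by
    rw [hN]
    refine key (List.finRange r) (bigM A b) ?_
    intro c _ s
    cases s with
    | inl q =>
      simp only [bigM]
      by_cases h : q = c <;> simp [h, eq_comm]
    | inr u => simp [bigM]
  rw [Fintype.linearIndependent_iff]
  intro g hg c
  have hc := congrFun hg c.1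
  simp only [Finset.sum_apply, Pi.smul_apply, smul_eq_mul, Pi.zero_apply] at hc
  rw [Finset.sum_eq_single c] at hc
  · rw [hrow c.1 c.2 (Sum.inl c.1)] at hc
    simpa using hc
  · intro c' _ hne
    rw [hrow c.1 c.2 (Sum.inl c'.1)]
    have : (Sum.inl c'.1 : Fin n ⊕ Unit) ≠ Sum.inl c.1 := by
      intro h'
      exact hne (Subtype.ext (Sum.inl.inj h'))
    simp [this]
  · intro h
    exact absurd (Finset.mem_univ c) h
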